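/- Let n ≥ 1 with n ∉ N_B and n+1 ∈ N_B, and let ε_1,…,ε_n with ε_i ∈ {0,1,…,d_i−1} and ε_n ≠ 0. Then the quasi-nega-D values of the following two D-digit sequences are equal: the sequence with digits ε_1,…,ε_{n−1}, ε_n at position n, d_{n+1}−1 at position n+1, and β_k at every position k ≥ n+2; and the sequence with digits ε_1,…,ε_{n−1}, ε_n−1 at position n, 0 at position n+1, and γ_k at every position k ≥ n+2. -/

import Mathlib

open scoped Classical BigOperators

/-- Sign of the `n`-th term: `-1` if `n ∈ N_B`, `+1` otherwise. -/
noncomputable def sigma (B : Set ℕ+) (n : ℕ+) : ℝ := if n ∈ B then -1 else 1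

/-- The partial product `d_1 d_2 ⋯ d_n`. -/
noncomputable def dprod (d : ℕ+ → ℕ) (n : ℕ+) : ℝ := ∏ i ∈ Finset.Icc 1 n, (d i : ℝ)

/-- The quasi-nega-D value of a D-digit sequence `ε`:
`T(ε) = Σ_{n≥1} σ_n ε_n / (d_1 d_2 ⋯ d_n)`. -/
noncomputable def qndVal (d : ℕ+ → ℕ) (B : Set ℕ+) (ε : ℕ+ → ℕ) : ℝ :=
  ∑' n : ℕ+, sigma B n * (ε n : ℝ) / dprod d n

/-!
Termwise, the two digit sequences differ by `+1` at position `n` and by `-(d_k - 1)` at every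
`k > n`: at `k ≥ n + 2` one of `σ_k β_k`, `σ_k γ_k` is `-(d_k - 1)` and the other is `0`,
whether or not `k ∈ N_B`. The difference of the values is therefore
`1 / (d_1 ⋯ d_n) - Σ_{k > n} (d_k - 1) / (d_1 ⋯ d_k)`, which vanishes because
`(d_k - 1) / (d_1 ⋯ d_k) = 1 / (d_1 ⋯ d_{k-1}) - 1 / (d_1 ⋯ d_k)` telescopes.
-/

open Filter Topology

lemma tsum_add_eq_of_hasSum_zero {ι α : Type*} [AddCommGroup α] [TopologicalSpace α]
    [IsTopologicalAddGroup α] [T2Space α] {f g : ι → α} (hg : HasSum g 0) :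
    ∑' i, (f i + g i) = ∑' i, f i := by
  by_cases hf : Summable f
  · rw [hf.tsum_add hg.summable, hg.tsum_eq, add_zero]
  · rw [tsum_eq_zero_of_not_summable hf, tsum_eq_zero_of_not_summable]
    exact fun h => hf (by simpa using h.sub hg.summable)

noncomputable def dprodNat (d : ℕ+ → ℕ) (m : ℕ) : ℝ := ∏ i ∈ Finset.range m, (d i.succPNat : ℝ)

lemma dprodNat_succ (d : ℕ+ → ℕ) (m : ℕ) : dprodNat d (m + 1) = dprodNat d m * d m.succPNat :=
  Finset.prod_range_succ _ _

lemma dprod_add_one (d : ℕ+ → ℕ) (k : ℕ+) : dprod d (k + 1) = dprod d k * d (k + 1) := by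
  rw [dprod, dprod, ← Finset.insert_Icc_right_eq_Icc_add_one (by simp),
    Finset.prod_insert (by simp), mul_comm]

lemma dprod_eq_dprodNat (d : ℕ+ → ℕ) (k : ℕ+) : dprod d k = dprodNat d k := by
  induction k using PNat.recOn with
  | one => simp [dprod, dprodNat, show Nat.succPNat 0 = 1 from rfl]
  | succ k ih => rw [dprod_add_one, ih, PNat.add_coe, PNat.one_coe, dprodNat_succ]; rfl

lemma dprodNat_pos {d : ℕ+ → ℕ} (hd : ∀ k, 0 < d k) (m : ℕ) : 0 < dprodNat d m :=
  Finset.prod_pos fun _ _ => Nat.cast_pos.2 (hd _)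

lemma dprodNat_mono {d : ℕ+ → ℕ} (hd : ∀ k, 1 ≤ d k) : Monotone (dprodNat d) :=
  monotone_nat_of_le_succ fun m => by
    rw [dprodNat_succ]
    exact le_mul_of_one_le_right (dprodNat_pos hd m).le (by exact_mod_cast hd _)

lemma two_pow_le_dprodNat {d : ℕ+ → ℕ} (hd : ∀ k, 2 ≤ d k) (m : ℕ) : 2 ^ m ≤ dprodNat d m := by
  simpa [dprodNat] using Finset.prod_le_prod (s := Finset.range m) (fun _ _ => zero_le_two)
    fun i _ => (by exact_mod_cast hd i.succPNat : (2 : ℝ) ≤ d i.succPNat)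

lemma tendsto_dprodNat_atTop {d : ℕ+ → ℕ} (hd : ∀ k, 2 ≤ d k) : Tendsto (dprodNat d) atTop atTop :=
  tendsto_atTop_mono (two_pow_le_dprodNat hd) (tendsto_pow_atTop_atTop_of_one_lt one_lt_two)

lemma hasSum_sub_succ_of_antitone {f : ℕ → ℝ} (hf : Antitone f) (hlim : Tendsto f atTop (𝓝 0)) :
    HasSum (fun m => f m - f (m + 1)) (f 0) := by
  rw [hasSum_iff_tendsto_nat_of_nonneg fun m => sub_nonneg.2 (hf m.le_succ)]
  simp_rw [Finset.sum_range_sub']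
  simpa using hlim.const_sub (f 0)

lemma hasSum_tail_div_dprod {d : ℕ+ → ℕ} (hd : ∀ k, 2 ≤ d k) (n : ℕ+) :
    HasSum (fun k : ℕ+ => (if n < k then (d k : ℝ) - 1 else 0) / dprod d k) (1 / dprod d n) := by
  have hd0 : ∀ k, 0 < d k := fun k => two_pos.trans_le (hd k)
  -- `v` is constant up to `n`, so its differences vanish below `n` and telescope above it.
  set v : ℕ → ℝ := fun m => (dprodNat d (max n m))⁻¹
  have hv : HasSum (fun m => v m - v (m + 1)) (v 0) := by
    refine hasSum_sub_succ_of_antitone (fun a b hab => ?_) ?_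
    · exact inv_anti₀ (dprodNat_pos hd0 _)
        (dprodNat_mono (fun k => one_le_two.trans (hd k)) (max_le_max le_rfl hab))
    · exact tendsto_inv_atTop_zero.comp
        ((tendsto_dprodNat_atTop hd).comp (tendsto_atTop_mono (le_max_right _) tendsto_id))
  rw [← Equiv.hasSum_iff Equiv.pnatEquivNat.symm]
  convert hv using 1
  · funext m
    simp only [Function.comp, Equiv.pnatEquivNat_symm_apply, dprod_eq_dprodNat, Nat.succPNat_coe, v]
    have hlt : n < m.succPNat ↔ (n : ℕ) ≤ m := by
      rw [← PNat.coe_lt_coe, Nat.succPNat_coe]; omega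
    by_cases h : (n : ℕ) ≤ m
    · have hdm : (0 : ℝ) < d m.succPNat := Nat.cast_pos.2 (hd0 _)
      have hP := dprodNat_pos hd0 m
      rw [if_pos (hlt.2 h), max_eq_right h, max_eq_right (by omega), dprodNat_succ]
      field_simp
    · rw [if_neg (mt hlt.1 h), max_eq_left (by omega), max_eq_left (by omega), zero_div, sub_self]
  · simp [v, dprod_eq_dprodNat]

section TwoRepresentations

variable (d : ℕ+ → ℕ) (B : Set ℕ+) (n : ℕ+) (ε : ℕ+ → ℕ)

noncomputable def betaTailDigits : ℕ+ → ℕ := fun k =>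
  if k < n then ε k else if k = n then ε n
  else if k = n + 1 then d (n + 1) - 1
  else if k ∈ B then d k - 1 else 0

noncomputable def gammaTailDigits : ℕ+ → ℕ := fun k =>
  if k < n then ε k else if k = n then ε n - 1
  else if k = n + 1 then 0
  else if k ∉ B then d k - 1 else 0

variable {d B n ε}

lemma sigma_mul_betaTailDigits (hd : ∀ k, 1 ≤ d k) (hn : n ∉ B) (hn1 : n + 1 ∈ B)
    (hεn : ε n ≠ 0) (k : ℕ+) :
    sigma B k * betaTailDigits d B n ε k = sigma B k * gammaTailDigits d B n ε k
      + (if k = n then 1 else 0) - (if n < k then (d k : ℝ) - 1 else 0) := by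
  rcases lt_trichotomy k n with hk | rfl | hk
  · simp [betaTailDigits, gammaTailDigits, hk, hk.ne, hk.not_gt]
  · simp [betaTailDigits, gammaTailDigits, sigma, hn, Nat.cast_sub (Nat.one_le_iff_ne_zero.2 hεn)]
  · have hcast : ((d k - 1 : ℕ) : ℝ) = d k - 1 := by rw [Nat.cast_sub (hd k)]; simp
    obtain rfl | hk1 := eq_or_ne k (n + 1)
    · simp [betaTailDigits, gammaTailDigits, sigma, hk.ne', hk.not_gt, hn1, hcast]
    · by_cases hB : k ∈ B <;>
        simp [betaTailDigits, gammaTailDigits, sigma, hk, hk.ne', hk.not_gt, hk1, hB, hcast]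

end TwoRepresentations

theorem quasiNegaD_two_reps_notMem_mem_general (d : ℕ+ → ℕ) (hd : ∀ k, 2 ≤ d k) (B : Set ℕ+)
    (n : ℕ+) (hn : n ∉ B) (hn1 : n + 1 ∈ B)
    (ε : ℕ+ → ℕ) (hεn : ε n ≠ 0) :
    qndVal d B (fun k =>
        if k < n then ε k else if k = n then ε n
        else if k = n + 1 then d (n + 1) - 1
        else if k ∈ B then d k - 1 else 0)
      = qndVal d B (fun k =>
        if k < n then ε k else if k = n then ε n - 1
        else if k = n + 1 then 0
        else if k ∉ B then d k - 1 else 0) := by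
  have hcorr : HasSum (fun k : ℕ+ =>
      ((if k = n then 1 else 0) - (if n < k then (d k : ℝ) - 1 else 0)) / dprod d k) 0 := by
    have hone := hasSum_single (f := fun k : ℕ+ => (if k = n then (1 : ℝ) else 0) / dprod d k) n
      fun k hk => by simp [hk]
    simpa [sub_div] using hone.sub (hasSum_tail_div_dprod hd n)
  change qndVal d B (betaTailDigits d B n ε) = qndVal d B (gammaTailDigits d B n ε)
  refine (tsum_congr fun k => ?_).trans (tsum_add_eq_of_hasSum_zero hcorr)
  rw [sigma_mul_betaTailDigits (fun k => one_le_two.trans (hd k)) hn hn1 hεn]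
  ring

/-- Case `n ∉ N_B`, `n+1 ∈ N_B`: the two indicated D-digit sequences have equal
quasi-nega-D values. -/
theorem quasiNegaD_two_reps_notMem_mem (d : ℕ+ → ℕ) (hd : ∀ k, 2 ≤ d k) (B : Set ℕ+)
    (n : ℕ+) (hn : n ∉ B) (hn1 : n + 1 ∈ B)
    (ε : ℕ+ → ℕ) (hε : ∀ k, ε k < d k) (hεn : ε n ≠ 0) :
    qndVal d B (fun k =>
        if k < n then ε k else if k = n then ε n
        else if k = n + 1 then d (n + 1) - 1
        else if k ∈ B then d k - 1 else 0)
      = qndVal d B (fun k =>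
        if k < n then ε k else if k = n then ε n - 1
        else if k = n + 1 then 0
        else if k ∉ B then d k - 1 else 0) :=
  quasiNegaD_two_reps_notMem_mem_general d hd B n hn hn1 ε hεn
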